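/- arXiv:2004.00041 — 2 statements merged into one kernel-verified Lean document; each statement's English description precedes it below -/
import Mathlib

section
/- Stability of strongly convex local minimizers: Let θ0 ∈ ℝ^d, ε > 0, and let f1, f2 : B_ε(θ0) → ℝ be twice continuously differentiable. Suppose θ0 is a critical point of f1 (∇f1(θ0) = 0) and λ_min(∇²f1(θ)) ≥ c0 for some c0 > 0 and all θ ∈ B_ε(θ0). If |f1(θ) − f2(θ)| ≤ δ and ‖∇²f1(θ) − ∇²f2(θ)‖ ≤ δ for some δ < min(c0, c0 ε²/4) and all θ ∈ B_ε(θ0), then f2 has a unique critical point in B_ε(θ0), and this critical point is a local minimizer of f2. -/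
/-!
Restricting `f` to a segment `t ↦ a + t (b - a)` turns a Hessian bound `⟪v, ∇²f v⟫ ≥ m ‖v‖²`
into the second-derivative bound `m ‖b - a‖²`, whence
`f b ≥ f a + ⟪∇f a, b - a⟫ + m/2 ‖b - a‖²`. As `‖∇²f1 - ∇²f2‖ ≤ δ < c0`, this holds for `f2`
with `m = c0 - δ > 0`, and applied in both directions it leaves room for only one critical
point. For existence, pick `r < ε` with `4δ < c0 r²`; on the sphere of radius `r` around `θ0`,
`f2 ≥ f1 - δ ≥ f1 θ0 + c0 r²/2 - δ > f1 θ0 + δ ≥ f2 θ0`, so `f2` attains its minimum over the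
closed ball inside the open ball, at a local minimizer and hence a critical point.
-/

open MeasureTheory Matrix
open scoped RealInnerProductSpace BigOperators

noncomputable section

variable {d : ℕ}

def hessQF (f : EuclideanSpace ℝ (Fin d) → ℝ) (θ v : EuclideanSpace ℝ (Fin d)) : ℝ :=
  ⟪v, fderiv ℝ (gradient f) θ v⟫

open Set Metric

theorem add_deriv_add_half_le_of_le_second_deriv {g g' g'' : ℝ → ℝ} {m : ℝ}
    (hg : ∀ t ∈ Icc (0 : ℝ) 1, HasDerivAt g (g' t) t)
    (hg' : ∀ t ∈ Icc (0 : ℝ) 1, HasDerivAt g' (g'' t) t)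
    (hm : ∀ t ∈ Icc (0 : ℝ) 1, m ≤ g'' t) :
    g 0 + g' 0 + m / 2 ≤ g 1 := by
  have hslope : ∀ t ∈ Icc (0 : ℝ) 1, m * t ≤ g' t - g' 0 := fun t ht => by
    simpa using (convex_Icc (0 : ℝ) 1).mul_sub_le_image_sub_of_le_deriv
      (fun x hx => (hg' x hx).continuousAt.continuousWithinAt)
      (fun x hx => (hg' x (interior_subset hx)).differentiableAt.differentiableWithinAt)
      (fun x hx => (hg' x (interior_subset hx)).deriv ▸ hm x (interior_subset hx))
      0 (left_mem_Icc.2 zero_le_one) t ht ht.1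
  have hderiv : ∀ t ∈ Icc (0 : ℝ) 1, HasDerivAt (fun t => g t - g' 0 * t - m / 2 * t ^ 2)
      (g' t - g' 0 - m * t) t := fun t ht =>
    (((hg t ht).sub ((hasDerivAt_id' t).const_mul (g' 0))).sub
      ((hasDerivAt_pow 2 t).const_mul (m / 2))).congr_deriv (by norm_num; ring)
  have hmono : MonotoneOn (fun t => g t - g' 0 * t - m / 2 * t ^ 2) (Icc 0 1) :=
    monotoneOn_of_hasDerivWithinAt_nonneg (convex_Icc 0 1)
      (fun t ht => (hderiv t ht).continuousAt.continuousWithinAt)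
      (fun t ht => (hderiv t (interior_subset ht)).hasDerivWithinAt)
      (fun t ht => sub_nonneg.2 (hslope t (interior_subset ht)))
  have hends := hmono (left_mem_Icc.2 zero_le_one) (right_mem_Icc.2 zero_le_one) zero_le_one
  norm_num at hends
  linarith

section InnerProductSpace

variable {F : Type*} [NormedAddCommGroup F] [InnerProductSpace ℝ F]

theorem sub_mul_sq_le_inner_apply_of_norm_sub_le {A B : F →L[ℝ] F} {c δ : ℝ}
    (hAB : ‖A - B‖ ≤ δ) {v : F} (hA : c * ‖v‖ ^ 2 ≤ ⟪v, A v⟫) :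
    (c - δ) * ‖v‖ ^ 2 ≤ ⟪v, B v⟫ := by
  have hdiff : ⟪v, (A - B) v⟫ ≤ δ * ‖v‖ ^ 2 :=
    calc ⟪v, (A - B) v⟫ ≤ ‖v‖ * ‖(A - B) v‖ := real_inner_le_norm _ _
      _ ≤ ‖v‖ * (‖A - B‖ * ‖v‖) := by gcongr; exact (A - B).le_opNorm v
      _ ≤ δ * ‖v‖ ^ 2 := by nlinarith [norm_nonneg v]
  rw [_root_.sub_apply, inner_sub_right] at hdiff
  linarith

variable [CompleteSpace F]

theorem ContDiffOn.differentiableOn_gradient {f : F → ℝ} {s : Set F} (hs : IsOpen s)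
    (hf : ContDiffOn ℝ 2 f s) : DifferentiableOn ℝ (gradient f) s :=
  (InnerProductSpace.toDual ℝ F).symm.toContinuousLinearEquiv.comp_differentiableOn_iff.2
    ((hf.fderiv_of_isOpen hs (by norm_num)).differentiableOn one_ne_zero)

theorem Convex.add_inner_gradient_add_le_of_hessian_ge {s : Set F} (hs : IsOpen s)
    (hsc : Convex ℝ s) {f : F → ℝ} (hf : DifferentiableOn ℝ f s)
    (hgrad : DifferentiableOn ℝ (gradient f) s) {c : ℝ}
    (hH : ∀ x ∈ s, ∀ v, c * ‖v‖ ^ 2 ≤ ⟪v, fderiv ℝ (gradient f) x v⟫) {a b : F}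
    (ha : a ∈ s) (hb : b ∈ s) :
    f a + ⟪gradient f a, b - a⟫ + c / 2 * ‖b - a‖ ^ 2 ≤ f b := by
  set w := b - a
  have hseg : ∀ t ∈ Icc (0 : ℝ) 1, a + t • w ∈ s := fun _ ht => hsc.add_smul_sub_mem ha hb ht
  have hline (t : ℝ) : HasDerivAt (fun t : ℝ => a + t • w) w t := by
    simpa using ((hasDerivAt_id t).smul_const w).const_add a
  have hsegment := add_deriv_add_half_le_of_le_second_deriv (g := fun t => f (a + t • w))
    (g' := fun t => ⟪gradient f (a + t • w), w⟫)
    (g'' := fun t => ⟪fderiv ℝ (gradient f) (a + t • w) w, w⟫) (m := c * ‖w‖ ^ 2)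
    (fun t ht => by
      rw [inner_gradient_left]
      exact (hf.differentiableAt (hs.mem_nhds (hseg t ht))).hasFDerivAt.comp_hasDerivAt t (hline t))
    (fun t ht => by
      simpa using ((hgrad.differentiableAt (hs.mem_nhds (hseg t ht))).hasFDerivAt.comp_hasDerivAt
        t (hline t)).inner ℝ (hasDerivAt_const t w))
    (fun t ht => real_inner_comm w _ ▸ hH _ (hseg t ht) w)
  simp only [zero_smul, add_zero, one_smul, w, add_sub_cancel] at hsegment
  linarith

theorem Convex.eq_of_gradient_eq_zero_of_hessian_ge {s : Set F} (hs : IsOpen s)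
    (hsc : Convex ℝ s) {f : F → ℝ} (hf : DifferentiableOn ℝ f s)
    (hgrad : DifferentiableOn ℝ (gradient f) s) {c : ℝ} (hc : 0 < c)
    (hH : ∀ x ∈ s, ∀ v, c * ‖v‖ ^ 2 ≤ ⟪v, fderiv ℝ (gradient f) x v⟫) {a b : F}
    (ha : a ∈ s) (hb : b ∈ s) (hfa : gradient f a = 0) (hfb : gradient f b = 0) : a = b := by
  have hab := hsc.add_inner_gradient_add_le_of_hessian_ge hs hf hgrad hH ha hb
  have hba := hsc.add_inner_gradient_add_le_of_hessian_ge hs hf hgrad hH hb ha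
  rw [hfa, inner_zero_left] at hab
  rw [hfb, inner_zero_left, norm_sub_rev] at hba
  have hsq : ‖b - a‖ ^ 2 ≤ 0 := by nlinarith
  exact (sub_eq_zero.1 (by simpa using hsq)).symm

theorem IsLocalMin.gradient_eq_zero {f : F → ℝ} {a : F} (h : IsLocalMin f a) :
    gradient f a = 0 := by
  rw [gradient, h.fderiv_eq_zero, map_zero]

end InnerProductSpace

/-- **Stability of strongly convex local minimizers.**
If `θ0` is a critical point of `f1`, `f1` is `c0`-strongly convex on `B_ε(θ0)`, and `f2` is
uniformly `δ`-close to `f1` in value and Hessian on `B_ε(θ0)` with `δ < min(c0, c0 ε²/4)`,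
then `f2` has a unique critical point in `B_ε(θ0)`, which is a local minimizer of `f2`. -/
theorem statement5 (θ0 : EuclideanSpace ℝ (Fin d)) (ε : ℝ) (hε : 0 < ε)
    (f1 f2 : EuclideanSpace ℝ (Fin d) → ℝ)
    (hf1 : ContDiffOn ℝ 2 f1 (Metric.ball θ0 ε))
    (hf2 : ContDiffOn ℝ 2 f2 (Metric.ball θ0 ε))
    (c0 δ : ℝ) (hc0 : 0 < c0)
    (hcrit : gradient f1 θ0 = 0)
    (hconv : ∀ θ ∈ Metric.ball θ0 ε, ∀ v, c0 * ‖v‖ ^ 2 ≤ hessQF f1 θ v)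
    (hδ : δ < min c0 (c0 * ε ^ 2 / 4))
    (hval : ∀ θ ∈ Metric.ball θ0 ε, |f1 θ - f2 θ| ≤ δ)
    (hhess : ∀ θ ∈ Metric.ball θ0 ε,
      ‖fderiv ℝ (gradient f1) θ - fderiv ℝ (gradient f2) θ‖ ≤ δ) :
    ∃ θ1 ∈ Metric.ball θ0 ε, gradient f2 θ1 = 0 ∧
      (∀ θ ∈ Metric.ball θ0 ε, gradient f2 θ = 0 → θ = θ1) ∧
      IsLocalMin f2 θ1 := by
  have hθ0 : θ0 ∈ ball θ0 ε := mem_ball_self hε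
  have hconv2 : ∀ θ ∈ ball θ0 ε, ∀ v,
      (c0 - δ) * ‖v‖ ^ 2 ≤ ⟪v, fderiv ℝ (gradient f2) θ v⟫ :=
    fun θ hθ v => sub_mul_sq_le_inner_apply_of_norm_sub_le (hhess θ hθ) (hconv θ hθ v)
  obtain ⟨r, hr0, hrε, hr⟩ : ∃ r, 0 < r ∧ r < ε ∧ 4 * δ / c0 < r ^ 2 := by
    have hsqrt : √(4 * δ / c0) < ε := (Real.sqrt_lt' hε).2 <| by
      rw [div_lt_iff₀ hc0]; linarith [hδ.trans_le (min_le_right _ _)]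
    exact ⟨(√(4 * δ / c0) + ε) / 2, by positivity, by linarith,
      (Real.sqrt_lt' (by positivity)).1 (by linarith)⟩
  have hsphere : ∀ θ ∈ sphere θ0 r, f2 θ0 < f2 θ := by
    intro θ hθ
    have hθB : θ ∈ ball θ0 ε := sphere_subset_ball hrε hθ
    have hgrowth := (convex_ball θ0 ε).add_inner_gradient_add_le_of_hessian_ge isOpen_ball
      (hf1.differentiableOn two_ne_zero) (hf1.differentiableOn_gradient isOpen_ball) hconv hθ0 hθB
    rw [hcrit, inner_zero_left, ← dist_eq_norm, mem_sphere.1 hθ] at hgrowth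
    linarith [(div_lt_iff₀ hc0).1 hr, abs_le.1 (hval θ hθB), abs_le.1 (hval θ0 hθ0)]
  obtain ⟨θ1, hθ1, hmin⟩ := exists_isLocalMin_mem_ball
    (hf2.continuousOn.mono (closedBall_subset_ball hrε)) (mem_closedBall_self hr0.le) hsphere
  have hθ1B : θ1 ∈ ball θ0 ε := ball_subset_ball hrε.le hθ1
  refine ⟨θ1, hθ1B, hmin.gradient_eq_zero, fun θ hθ hgrad => ?_, hmin⟩
  exact (convex_ball θ0 ε).eq_of_gradient_eq_zero_of_hessian_ge isOpen_ball
    (hf2.differentiableOn two_ne_zero) (hf2.differentiableOn_gradient isOpen_ball)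
    (sub_pos.2 (hδ.trans_le (min_le_left _ _))) hconv2 hθ hθ1B hgrad hmin.gradient_eq_zero
end
end

section
/- Eigenvalue structure of matrices with a graded block structure: Suppose the family H(σ) ∈ ℝ^{d×d} of symmetric matrices has a graded block structure with respect to the partition into blocks of sizes d_1, …, d_L. Then there exist constants C', c', σ0' > 0 such that for all σ > σ0': (a) H(σ) has exactly d_ℓ eigenvalues (counted with multiplicity) in [c' σ^{−2ℓ}, C' σ^{−2ℓ}] for each ℓ = 1, …, L, and in particular λ_min(H(σ)) ≥ c' σ^{−2L}; (b) for each ℓ with d_1 + … + d_ℓ > 0, the upper-left submatrix H_{:ℓ,:ℓ} (consisting of the first ℓ × ℓ blocks) satisfies λ_min(H_{:ℓ,:ℓ}) ≥ c' σ^{−2ℓ}; and (c) for each such ℓ, the corresponding upper-left submatrix (H^{−1})_{:ℓ,:ℓ} of the inverse satisfies λ_max((H^{−1})_{:ℓ,:ℓ}) ≤ C' σ^{2ℓ}. -/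
/-!
Write `β_i = σ^{-2(k+1)}` for a coordinate `i` in block `k`. Scaling the `k`-th block of `v` by
`σ^{k+1}` turns the graded block bounds into a matrix whose diagonal blocks lie between `c` and
`C` and whose off-diagonal blocks are `O(σ⁻¹)`, so for large `σ` the quadratic form `vᵀHv` is
comparable to `∑ β_i v_i²`. Consequently `H` is bounded below by `≍ σ^{-2m}` on vectors living in
the first `m` blocks and bounded above by `≍ σ^{-2(m+1)}` on vectors living in the remaining
blocks. The dimension count of Courant–Fischer turns these two estimates, together with the gap
between consecutive scales, into the exact eigenvalue count in each window. The bound on the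
upper-left part of `H⁻¹` follows from Cauchy–Schwarz applied to `xᵀH⁻¹x = uᵀHu` with `u = H⁻¹x`.
-/

open Matrix
open scoped BigOperators

noncomputable section

/-- The bilinear form of the `(k, ℓ)` block of a block matrix indexed by
`Σ ℓ : Fin L, Fin (D ℓ)`. -/
def blockQF {L : ℕ} {D : Fin L → ℕ}
    (H : Matrix ((ℓ : Fin L) × Fin (D ℓ)) ((ℓ : Fin L) × Fin (D ℓ)) ℝ)
    (k ℓ : Fin L) (u : Fin (D k) → ℝ) (v : Fin (D ℓ) → ℝ) : ℝ :=
  ∑ a, ∑ b, u a * H ⟨k, a⟩ ⟨ℓ, b⟩ * v b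

/-- A `σ`-indexed family of symmetric block matrices has a **graded block structure** with
respect to the partition into blocks of sizes `D 0, …, D (L−1)` if, for some `C, c, σ0 > 0`
and all `σ > σ0`, the `ℓ`-th (1-based) diagonal block has all its eigenvalues in
`[c σ^{−2ℓ}, C σ^{−2ℓ}]` and the `(k, ℓ)` off-diagonal block has operator norm at most
`C σ^{−2 max(k,ℓ)}`. -/
def GradedBlockStructure {L : ℕ} (D : Fin L → ℕ)
    (H : ℝ → Matrix ((ℓ : Fin L) × Fin (D ℓ)) ((ℓ : Fin L) × Fin (D ℓ)) ℝ) : Prop :=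
  ∃ C > (0:ℝ), ∃ c > (0:ℝ), ∃ σ0 > (0:ℝ), ∀ σ : ℝ, σ0 < σ →
    ∀ k ℓ : Fin L, 0 < D k → 0 < D ℓ →
      (∀ v : Fin (D ℓ) → ℝ,
        c * (σ ^ (2 * ((ℓ : ℕ) + 1)))⁻¹ * (v ⬝ᵥ v) ≤ blockQF (H σ) ℓ ℓ v v ∧
        blockQF (H σ) ℓ ℓ v v ≤ C * (σ ^ (2 * ((ℓ : ℕ) + 1)))⁻¹ * (v ⬝ᵥ v)) ∧
      (∀ (u : Fin (D k) → ℝ) (v : Fin (D ℓ) → ℝ),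
        |blockQF (H σ) k ℓ u v| ≤
          C * (σ ^ (2 * max ((k : ℕ) + 1) ((ℓ : ℕ) + 1)))⁻¹ *
            Real.sqrt (u ⬝ᵥ u) * Real.sqrt (v ⬝ᵥ v))

open Finset Module Submodule
open scoped InnerProductSpace

theorem OrthonormalBasis.finrank_le_card_nonneg {E ι : Type*} [NormedAddCommGroup E]
    [InnerProductSpace ℝ E] [FiniteDimensional ℝ E] [Fintype ι] (b : OrthonormalBasis ι ℝ E)
    (μ : ι → ℝ) (W : Submodule ℝ E) (hW : ∀ z ∈ W, 0 ≤ ∑ j, μ j * ⟪b j, z⟫_ℝ ^ 2) :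
    finrank ℝ W ≤ #{j | 0 ≤ μ j} := by
  classical
  set K := span ℝ (Set.range (b ∘ Subtype.val : {j // 0 ≤ μ j} → E))
  have hK : finrank ℝ K = #{j | 0 ≤ μ j} := by
    rw [finrank_span_eq_card (b.orthonormal.comp _ Subtype.val_injective).linearIndependent,
      Fintype.card_subtype]
  have hzero : ∀ z ∈ Kᗮ, ∀ j, 0 ≤ μ j → ⟪b j, z⟫_ℝ = 0 := fun z hz j hj =>
    inner_right_of_mem_orthogonal
      (subset_span (Set.mem_range_self (⟨j, hj⟩ : {j // 0 ≤ μ j}))) hz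
  have hdisj : Disjoint W Kᗮ := by
    refine Submodule.disjoint_def.2 fun z hzW hzK => ?_
    have hterm : ∀ j, μ j * ⟪b j, z⟫_ℝ ^ 2 ≤ 0 := fun j => by
      rcases le_or_gt 0 (μ j) with hj | hj
      · simp [hzero z hzK j hj]
      · exact mul_nonpos_of_nonpos_of_nonneg hj.le (sq_nonneg _)
    have hsum := (sum_eq_zero_iff_of_nonpos fun j _ => hterm j).1
      (le_antisymm (sum_nonpos fun j _ => hterm j) (hW z hzW))
    rw [← b.sum_repr' z]
    refine sum_eq_zero fun j _ => ?_
    have hj : ⟪b j, z⟫_ℝ = 0 := by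
      rcases le_or_gt 0 (μ j) with hj | hj
      · exact hzero z hzK j hj
      · simpa [hj.ne] using hsum j (mem_univ j)
    simp [hj]
  have h1 := Submodule.finrank_add_finrank_le_of_disjoint hdisj
  have h2 := K.finrank_add_finrank_orthogonal
  omega

namespace EuclideanSpace

variable {I : Type*} [Fintype I]

lemma real_inner_eq_dotProduct (x y : EuclideanSpace ℝ I) :
    ⟪x, y⟫_ℝ = x.ofLp ⬝ᵥ y.ofLp := by
  simp [inner_eq_star_dotProduct, dotProduct_comm]

lemma dotProduct_self_eq_sum_inner_sq {ι : Type*} [Fintype ι]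
    (b : OrthonormalBasis ι ℝ (EuclideanSpace ℝ I)) (z : EuclideanSpace ℝ I) :
    z.ofLp ⬝ᵥ z.ofLp = ∑ j, ⟪b j, z⟫_ℝ ^ 2 := by
  rw [← real_inner_eq_dotProduct, ← b.sum_inner_mul_inner z z]
  simp only [real_inner_comm z, sq]

theorem card_le_card_nonneg_of_supported {ι : Type*} [Fintype ι] [DecidableEq I]
    (b : OrthonormalBasis ι ℝ (EuclideanSpace ℝ I)) (μ : ι → ℝ) (s : Finset I)
    (h : ∀ z : EuclideanSpace ℝ I, (∀ i ∉ s, z i = 0) → 0 ≤ ∑ j, μ j * ⟪b j, z⟫_ℝ ^ 2) :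
    #s ≤ #{j | 0 ≤ μ j} := by
  set K := span ℝ (Set.range
    ((fun i => EuclideanSpace.single i (1 : ℝ)) ∘ Subtype.val : {i // i ∉ s} → _))
  have hK : finrank ℝ K = #sᶜ := by
    rw [finrank_span_eq_card (EuclideanSpace.orthonormal_single.comp _
      Subtype.val_injective).linearIndependent, Fintype.card_subtype]
    congr 1; ext; simp
  have hKperp : finrank ℝ Kᗮ = #s := by
    have := K.finrank_add_finrank_orthogonal
    rw [hK, finrank_euclideanSpace, card_compl] at this
    have := s.card_le_univ
    omega
  have hsupp : ∀ z ∈ Kᗮ, ∀ i ∉ s, z i = 0 := fun z hz i hi => by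
    simpa [inner_single_left] using inner_right_of_mem_orthogonal
      (subset_span (Set.mem_range_self (⟨i, hi⟩ : {i // i ∉ s}))) hz
  rw [← hKperp]
  exact b.finrank_le_card_nonneg μ Kᗮ fun z hz => h z (hsupp z hz)

end EuclideanSpace

theorem card_filter_mem_Icc_add_card_filter_lt {ι : Type*} [Fintype ι] [DecidableEq ι]
    (f : ι → ℝ) {a b : ℝ} (hab : a ≤ b) :
    #{i | f i ∈ Set.Icc a b} + #{i | b < f i} = #{i | a ≤ f i} := by
  rw [← card_union_of_disjoint (disjoint_filter.2 fun i _ h1 h2 => (not_lt.2 h1.2) h2),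
    ← filter_or]
  congr 1
  ext i
  simp only [Set.mem_Icc, mem_filter, mem_univ, true_and]
  constructor
  · rintro (h | h)
    exacts [h.1, hab.trans h.le]
  · intro h
    exact (le_or_gt (f i) b).imp (fun h' => ⟨h, h'⟩) id

namespace Matrix.IsHermitian

variable {I : Type*} [Fintype I] [DecidableEq I] {A : Matrix I I ℝ}

lemma dotProduct_mulVec_eq_sum (hA : A.IsHermitian) (z : EuclideanSpace ℝ I) :
    z.ofLp ⬝ᵥ A *ᵥ z.ofLp = ∑ j, hA.eigenvalues j * ⟪hA.eigenvectorBasis j, z⟫_ℝ ^ 2 := by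
  set b := hA.eigenvectorBasis
  have hz : A *ᵥ z.ofLp = ∑ j, (hA.eigenvalues j * ⟪b j, z⟫_ℝ) • (b j).ofLp := by
    conv_lhs => rw [← b.sum_repr' z]
    simp [WithLp.ofLp_sum, mulVec_sum, mulVec_smul, b, hA.mulVec_eigenvectorBasis, smul_smul,
      mul_comm]
  simp only [hz, dotProduct_sum, dotProduct_smul, smul_eq_mul,
    ← EuclideanSpace.real_inner_eq_dotProduct, real_inner_comm z, mul_assoc, sq]

theorem card_le_card_eigenvalues_ge (hA : A.IsHermitian) {t : ℝ} {s : Finset I}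
    (h : ∀ z : I → ℝ, (∀ i ∉ s, z i = 0) → t * (z ⬝ᵥ z) ≤ z ⬝ᵥ A *ᵥ z) :
    #s ≤ #{i | t ≤ hA.eigenvalues i} := by
  simpa only [sub_nonneg] using EuclideanSpace.card_le_card_nonneg_of_supported
    hA.eigenvectorBasis (fun j => hA.eigenvalues j - t) s fun z hz => by
      simp only [sub_mul, sum_sub_distrib, ← mul_sum, ← hA.dotProduct_mulVec_eq_sum,
        ← EuclideanSpace.dotProduct_self_eq_sum_inner_sq, sub_nonneg]
      exact h z.ofLp hz

theorem card_le_card_eigenvalues_le (hA : A.IsHermitian) {t : ℝ} {s : Finset I}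
    (h : ∀ z : I → ℝ, (∀ i ∉ s, z i = 0) → z ⬝ᵥ A *ᵥ z ≤ t * (z ⬝ᵥ z)) :
    #s ≤ #{i | hA.eigenvalues i ≤ t} := by
  simpa only [sub_nonneg] using EuclideanSpace.card_le_card_nonneg_of_supported
    hA.eigenvectorBasis (fun j => t - hA.eigenvalues j) s fun z hz => by
      simp only [sub_mul, sum_sub_distrib, ← mul_sum, ← hA.dotProduct_mulVec_eq_sum,
        ← EuclideanSpace.dotProduct_self_eq_sum_inner_sq, sub_nonneg]
      exact h z.ofLp hz

theorem card_eigenvalues_ge_eq_and_gt_eq (hA : A.IsHermitian) (lev : I → ℕ) {lo hi : ℕ → ℝ}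
    (hlo : ∀ m v, (∀ i, m ≤ lev i → v i = 0) → lo m * (v ⬝ᵥ v) ≤ v ⬝ᵥ A *ᵥ v)
    (hhi : ∀ m v, (∀ i, lev i < m → v i = 0) → v ⬝ᵥ A *ᵥ v ≤ hi (m + 1) * (v ⬝ᵥ v))
    (hgap : ∀ m, hi (m + 1) < lo m) (m : ℕ) :
    #{i | lo m ≤ hA.eigenvalues i} = #{i | lev i < m} ∧
      #{i | hi (m + 1) < hA.eigenvalues i} = #{i | lev i < m} := by
  have hge : #{i | lev i < m} ≤ #{i | lo m ≤ hA.eigenvalues i} :=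
    hA.card_le_card_eigenvalues_ge fun v hv => hlo m v fun i hi => hv i (by simpa using hi)
  have hle : #{i | ¬ lev i < m} ≤ #{i | hA.eigenvalues i ≤ hi (m + 1)} :=
    hA.card_le_card_eigenvalues_le fun v hv => hhi m v fun i hi => hv i (by simpa using hi)
  have hmono : #{i | lo m ≤ hA.eigenvalues i} ≤ #{i | hi (m + 1) < hA.eigenvalues i} :=
    card_le_card (monotone_filter_right _ fun i _ h => (hgap m).trans_le h)
  have hlev := card_filter_add_card_filter_not (s := univ) fun i => lev i < m
  have heig := card_filter_add_card_filter_not (s := univ)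
    fun i => hA.eigenvalues i ≤ hi (m + 1)
  simp only [not_le] at heig
  omega

theorem card_eigenvalues_mem_Icc_eq (hA : A.IsHermitian) (lev : I → ℕ) {lo hi : ℕ → ℝ}
    (hlo : ∀ m v, (∀ i, m ≤ lev i → v i = 0) → lo m * (v ⬝ᵥ v) ≤ v ⬝ᵥ A *ᵥ v)
    (hhi : ∀ m v, (∀ i, lev i < m → v i = 0) → v ⬝ᵥ A *ᵥ v ≤ hi (m + 1) * (v ⬝ᵥ v))
    (hgap : ∀ m, hi (m + 1) < lo m) (hlohi : ∀ m, lo m ≤ hi m) (m : ℕ) :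
    #{i | hA.eigenvalues i ∈ Set.Icc (lo (m + 1)) (hi (m + 1))} = #{i | lev i = m} := by
  have hsplit : #{i | lev i < m + 1} = #{i | lev i < m} + #{i | lev i = m} := by
    rw [← card_union_of_disjoint (disjoint_filter.2 fun i _ h1 h2 => h1.ne h2), ← filter_or]
    congr 1
    ext i
    simp only [mem_filter, mem_univ, true_and]
    omega
  have hm := hA.card_eigenvalues_ge_eq_and_gt_eq lev hlo hhi hgap m
  have hm1 := hA.card_eigenvalues_ge_eq_and_gt_eq lev hlo hhi hgap (m + 1)
  have := card_filter_mem_Icc_add_card_filter_lt hA.eigenvalues (hlohi (m + 1))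
  omega

end Matrix.IsHermitian

lemma dotProduct_self_nonneg {ι : Type*} [Fintype ι] (v : ι → ℝ) : 0 ≤ v ⬝ᵥ v :=
  sum_nonneg fun i _ => mul_self_nonneg (v i)

theorem isUnit_det_of_le_dotProduct_mulVec {ι : Type*} [Fintype ι] [DecidableEq ι]
    {A : Matrix ι ι ℝ} {κ : ℝ} (hκ : 0 < κ) (h : ∀ v, κ * (v ⬝ᵥ v) ≤ v ⬝ᵥ A *ᵥ v) :
    IsUnit A.det := by
  rw [← isUnit_iff_isUnit_det, ← mulVec_injective_iff_isUnit]
  intro u w huw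
  have hA : A *ᵥ (u - w) = 0 := by rw [mulVec_sub, huw, sub_self]
  have h0 := h (u - w)
  rw [hA, dotProduct_zero] at h0
  exact sub_eq_zero.1 (dotProduct_self_eq_zero.1 (le_antisymm
    (nonpos_of_mul_nonpos_right h0 hκ) (dotProduct_self_nonneg _)))

theorem dotProduct_inv_mulVec_le {ι : Type*} [Fintype ι] [DecidableEq ι] {A : Matrix ι ι ℝ}
    (hA : IsUnit A.det) (p : ι → Prop) [DecidablePred p] {κ : ℝ} (hκ : 0 < κ)
    (h : ∀ u, κ * ∑ i ∈ univ with p i, u i ^ 2 ≤ u ⬝ᵥ A *ᵥ u)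
    (x : ι → ℝ) (hx : ∀ i, ¬ p i → x i = 0) :
    x ⬝ᵥ A⁻¹ *ᵥ x ≤ κ⁻¹ * (x ⬝ᵥ x) := by
  set u := A⁻¹ *ᵥ x
  have hAu : A *ᵥ u = x := by rw [mulVec_mulVec, mul_nonsing_inv _ hA, one_mulVec]
  have hx_filter : ∀ f : ι → ℝ, ∑ i, x i * f i = ∑ i ∈ univ with p i, x i * f i := fun f =>
    (sum_filter_of_ne fun i _ h => by_contra fun hi => h (by rw [hx i hi, zero_mul])).symm
  set P := ∑ i ∈ univ with p i, u i ^ 2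
  have hP : κ * P ≤ x ⬝ᵥ u := by simpa [hAu, dotProduct_comm u x] using h u
  have hXu : x ⬝ᵥ u = ∑ i ∈ univ with p i, x i * u i := hx_filter u
  have hXx : x ⬝ᵥ x = ∑ i ∈ univ with p i, x i ^ 2 := by
    simp only [dotProduct, hx_filter, sq]
  have hCS : (x ⬝ᵥ u) ^ 2 ≤ (x ⬝ᵥ x) * P := by
    rw [hXu, hXx]
    exact sum_mul_sq_le_sq_mul_sq _ _ _
  have hXnn := dotProduct_self_nonneg x
  rcases le_or_gt (x ⬝ᵥ u) 0 with hnp | hpos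
  · exact hnp.trans (by positivity)
  · rw [inv_mul_eq_div, le_div_iff₀ hκ]
    nlinarith

section ExtendByZero

variable {ι : Type*} (p : ι → Prop) [DecidablePred p] (v : {i // p i} → ℝ)

def extendByZero : ι → ℝ := fun i => if h : p i then v ⟨i, h⟩ else 0

variable {p v}

lemma extendByZero_of_not {i : ι} (hi : ¬ p i) : extendByZero p v i = 0 := dif_neg hi

lemma extendByZero_val (a : {i // p i}) : extendByZero p v a = v a := dif_pos a.2

variable [Fintype ι]

lemma sum_extendByZero_mul (f : ι → ℝ) :
    ∑ i, extendByZero p v i * f i = ∑ a, v a * f a := by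
  rw [← Fintype.sum_subtype_add_sum_subtype p, Fintype.sum_eq_zero (f := fun i : {i // ¬ p i} =>
    extendByZero p v i * f i) fun i => by rw [extendByZero_of_not i.2, zero_mul], add_zero]
  simp only [extendByZero_val]

lemma extendByZero_dotProduct_self :
    extendByZero p v ⬝ᵥ extendByZero p v = ∑ a, v a * v a := by
  simp only [dotProduct, sum_extendByZero_mul, extendByZero_val]

lemma extendByZero_dotProduct_mulVec (N : Matrix ι ι ℝ) :
    extendByZero p v ⬝ᵥ N *ᵥ extendByZero p v = ∑ a, ∑ b, v a * N a.1 b.1 * v b := by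
  simp only [dotProduct, mulVec, sum_extendByZero_mul]
  simp only [mul_comm (N _ _), sum_extendByZero_mul, mul_sum, mul_assoc]

end ExtendByZero

theorem abs_sum_sum_sub_sum_diag_le {ι : Type*} [Fintype ι] [DecidableEq ι]
    (T : ι → ι → ℝ) {a : ι → ℝ} (ha : ∀ k, 0 ≤ a k) {ε : ℝ} (hε : 0 ≤ ε)
    (hT : ∀ k l, k ≠ l → |T k l| ≤ ε * (a k * a l)) :
    |∑ k, ∑ l, T k l - ∑ k, T k k| ≤ ε * Fintype.card ι * ∑ k, a k ^ 2 := by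
  calc |∑ k, ∑ l, T k l - ∑ k, T k k|
      = |∑ k, ∑ l ∈ univ.erase k, T k l| := by
        simp only [← sum_sub_distrib, sum_erase_eq_sub (mem_univ _)]
    _ ≤ ∑ k, ∑ l ∈ univ.erase k, ε * (a k * a l) := by
        refine (abs_sum_le_sum_abs _ _).trans (sum_le_sum fun k _ => ?_)
        refine (abs_sum_le_sum_abs _ _).trans (sum_le_sum fun l hl => ?_)
        exact hT k l (ne_of_mem_erase hl).symm
    _ ≤ ∑ k, ∑ l, ε * (a k * a l) :=
        sum_le_sum fun k _ => sum_le_sum_of_subset_of_nonneg (erase_subset _ _)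
          fun l _ _ => by have := ha k; have := ha l; positivity
    _ = ε * (∑ k, a k) ^ 2 := by rw [sq, sum_mul_sum]; simp only [mul_sum]
    _ ≤ ε * Fintype.card ι * ∑ k, a k ^ 2 := by
        rw [mul_assoc]; exact mul_le_mul_of_nonneg_left sq_sum_le_card_mul_sum_sq hε

theorem inv_pow_two_mul_max_le {σ : ℝ} (hσ : 1 ≤ σ) {p q : ℕ} (hpq : p ≠ q) :
    (σ ^ (2 * max p q))⁻¹ ≤ σ⁻¹ * ((σ ^ p)⁻¹ * (σ ^ q)⁻¹) := by
  rw [← mul_inv, ← mul_inv, ← pow_add, ← pow_succ']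
  exact inv_pow_le_inv_pow_of_le hσ (by omega)

section Graded

variable {L : ℕ} {D : Fin L → ℕ}

def GradedBlockBounds (C c σ : ℝ) (M : Matrix (Σ ℓ, Fin (D ℓ)) (Σ ℓ, Fin (D ℓ)) ℝ) : Prop :=
  ∀ k ℓ : Fin L, 0 < D k → 0 < D ℓ →
    (∀ v : Fin (D ℓ) → ℝ,
      c * (σ ^ (2 * ((ℓ : ℕ) + 1)))⁻¹ * (v ⬝ᵥ v) ≤ blockQF M ℓ ℓ v v ∧
      blockQF M ℓ ℓ v v ≤ C * (σ ^ (2 * ((ℓ : ℕ) + 1)))⁻¹ * (v ⬝ᵥ v)) ∧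
    (∀ (u : Fin (D k) → ℝ) (v : Fin (D ℓ) → ℝ),
      |blockQF M k ℓ u v| ≤
        C * (σ ^ (2 * max ((k : ℕ) + 1) ((ℓ : ℕ) + 1)))⁻¹ *
          Real.sqrt (u ⬝ᵥ u) * Real.sqrt (v ⬝ᵥ v))

def gradedNormSq (σ : ℝ) (v : (Σ ℓ, Fin (D ℓ)) → ℝ) : ℝ :=
  ∑ i, (σ ^ (2 * ((i.1 : ℕ) + 1)))⁻¹ * v i ^ 2

def blockVec (v : (Σ ℓ, Fin (D ℓ)) → ℝ) (k : Fin L) : Fin (D k) → ℝ := fun a => v ⟨k, a⟩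

variable {M : Matrix (Σ ℓ, Fin (D ℓ)) (Σ ℓ, Fin (D ℓ)) ℝ} {C c σ : ℝ}

lemma blockQF_eq_zero_of_eq_zero (M : Matrix (Σ ℓ, Fin (D ℓ)) (Σ ℓ, Fin (D ℓ)) ℝ)
    {k l : Fin L} (h : D k = 0 ∨ D l = 0) (u : Fin (D k) → ℝ) (v : Fin (D l) → ℝ) :
    blockQF M k l u v = 0 := by
  rcases h with h | h
  · have : IsEmpty (Fin (D k)) := by rw [h]; infer_instance
    simp [blockQF]
  · have : IsEmpty (Fin (D l)) := by rw [h]; infer_instance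
    simp [blockQF]

lemma dotProduct_mulVec_eq_sum_blockQF (M : Matrix (Σ ℓ, Fin (D ℓ)) (Σ ℓ, Fin (D ℓ)) ℝ)
    (v : (Σ ℓ, Fin (D ℓ)) → ℝ) :
    v ⬝ᵥ M *ᵥ v = ∑ k, ∑ l, blockQF M k l (blockVec v k) (blockVec v l) := by
  simp only [dotProduct, mulVec, blockQF, blockVec, mul_sum, ← univ_sigma_univ, sum_sigma]
  refine sum_congr rfl fun k _ => ?_
  rw [sum_comm]
  simp only [mul_assoc]

lemma gradedNormSq_eq_sum_blocks (σ : ℝ) (v : (Σ ℓ, Fin (D ℓ)) → ℝ) :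
    gradedNormSq σ v =
      ∑ k : Fin L, (σ ^ (2 * ((k : ℕ) + 1)))⁻¹ * (blockVec v k ⬝ᵥ blockVec v k) := by
  simp only [gradedNormSq, ← univ_sigma_univ, sum_sigma, dotProduct, mul_sum, blockVec, sq]

lemma gradedNormSq_nonneg (σ : ℝ) (v : (Σ ℓ, Fin (D ℓ)) → ℝ) : 0 ≤ gradedNormSq σ v :=
  sum_nonneg fun i _ => by
    have := Even.pow_nonneg (even_two_mul ((i.1 : ℕ) + 1)) σ
    positivity

namespace GradedBlockBounds

lemma blockQF_diag (h : GradedBlockBounds C c σ M) (k : Fin L) (u : Fin (D k) → ℝ) :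
    c * (σ ^ (2 * ((k : ℕ) + 1)))⁻¹ * (u ⬝ᵥ u) ≤ blockQF M k k u u ∧
      blockQF M k k u u ≤ C * (σ ^ (2 * ((k : ℕ) + 1)))⁻¹ * (u ⬝ᵥ u) := by
  rcases Nat.eq_zero_or_pos (D k) with hk | hk
  · have : IsEmpty (Fin (D k)) := by rw [hk]; infer_instance
    simp [blockQF_eq_zero_of_eq_zero M (.inl hk), dotProduct]
  · exact (h k k hk hk).1 u

lemma abs_blockQF_le (h : GradedBlockBounds C c σ M) (hC : 0 ≤ C) (k l : Fin L)
    (u : Fin (D k) → ℝ) (v : Fin (D l) → ℝ) :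
    |blockQF M k l u v| ≤ C * (σ ^ (2 * max ((k : ℕ) + 1) ((l : ℕ) + 1)))⁻¹ *
      Real.sqrt (u ⬝ᵥ u) * Real.sqrt (v ⬝ᵥ v) := by
  by_cases hkl : 0 < D k ∧ 0 < D l
  · exact (h k l hkl.1 hkl.2).2 u v
  · rw [blockQF_eq_zero_of_eq_zero M (by omega), abs_zero]
    have := Even.pow_nonneg (even_two_mul (max ((k : ℕ) + 1) ((l : ℕ) + 1))) σ
    positivity

theorem quadForm_bounds (h : GradedBlockBounds C c σ M) (hC : 0 ≤ C) (hσ : 1 ≤ σ)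
    (hsmall : 2 * C * L ≤ c * σ) (v : (Σ ℓ, Fin (D ℓ)) → ℝ) :
    c / 2 * gradedNormSq σ v ≤ v ⬝ᵥ M *ᵥ v ∧
      v ⬝ᵥ M *ᵥ v ≤ (C + c / 2) * gradedNormSq σ v := by
  set w : Fin L → ℝ := fun k => blockVec v k ⬝ᵥ blockVec v k
  have hw : ∀ k, 0 ≤ w k := fun k => dotProduct_self_nonneg _
  set a : Fin L → ℝ := fun k => (σ ^ ((k : ℕ) + 1))⁻¹ * √(w k)
  have ha : ∀ k, 0 ≤ a k := fun k => by positivity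
  have ha2 : ∀ k, a k ^ 2 = (σ ^ (2 * ((k : ℕ) + 1)))⁻¹ * w k := fun k => by
    rw [mul_pow, Real.sq_sqrt (hw k), inv_pow, ← pow_mul, mul_comm ((k : ℕ) + 1)]
  have hS : gradedNormSq σ v = ∑ k, a k ^ 2 := by
    simp only [gradedNormSq_eq_sum_blocks, ha2, w]
  set T : Fin L → Fin L → ℝ := fun k l => blockQF M k l (blockVec v k) (blockVec v l)
  have hoff : ∀ k l, k ≠ l → |T k l| ≤ C * σ⁻¹ * (a k * a l) := fun k l hkl => by
    have hmax := inv_pow_two_mul_max_le hσ (p := (k : ℕ) + 1) (q := (l : ℕ) + 1)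
      (by simpa [Fin.val_inj] using hkl)
    calc |T k l| ≤ C * (σ ^ (2 * max ((k : ℕ) + 1) ((l : ℕ) + 1)))⁻¹ * √(w k) * √(w l) :=
          h.abs_blockQF_le hC k l _ _
      _ ≤ C * (σ⁻¹ * ((σ ^ ((k : ℕ) + 1))⁻¹ * (σ ^ ((l : ℕ) + 1))⁻¹)) * √(w k) * √(w l) := by
          gcongr
      _ = C * σ⁻¹ * (a k * a l) := by ring
  have hR := abs_sum_sum_sub_sum_diag_le T ha (by positivity) hoff
  have hdiag_lo : c * ∑ k, a k ^ 2 ≤ ∑ k, T k k := by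
    rw [mul_sum]
    exact sum_le_sum fun k _ => by rw [ha2, ← mul_assoc]; exact (h.blockQF_diag k _).1
  have hdiag_hi : ∑ k, T k k ≤ C * ∑ k, a k ^ 2 := by
    rw [mul_sum]
    exact sum_le_sum fun k _ => by rw [ha2, ← mul_assoc]; exact (h.blockQF_diag k _).2
  have hε : C * σ⁻¹ * L * ∑ k, a k ^ 2 ≤ c / 2 * ∑ k, a k ^ 2 := by
    refine mul_le_mul_of_nonneg_right ?_ (sum_nonneg fun k _ => sq_nonneg _)
    rw [mul_right_comm, ← div_eq_mul_inv, div_le_iff₀ (by positivity)]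
    linarith
  rw [Fintype.card_fin] at hR
  rw [dotProduct_mulVec_eq_sum_blockQF, hS]
  constructor <;> linarith [abs_le.1 hR]

end GradedBlockBounds

lemma inv_pow_mul_sum_lt_le_gradedNormSq (hσ : 1 ≤ σ) (m : ℕ) (v : (Σ ℓ, Fin (D ℓ)) → ℝ) :
    (σ ^ (2 * m))⁻¹ * ∑ i ∈ univ with (i.1 : ℕ) < m, v i ^ 2 ≤ gradedNormSq σ v := by
  rw [mul_sum]
  refine (sum_le_sum fun i hi => ?_).trans (sum_le_sum_of_subset_of_nonneg (filter_subset _ _)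
    fun i _ _ => ?_)
  · exact mul_le_mul_of_nonneg_right
      (inv_pow_le_inv_pow_of_le hσ (by simp at hi; omega)) (sq_nonneg _)
  · have := inv_pow_le_inv_pow_of_le hσ (Nat.zero_le (2 * ((i.1 : ℕ) + 1)))
    positivity

lemma gradedNormSq_le_of_forall_lt (hσ : 1 ≤ σ) (m : ℕ) (v : (Σ ℓ, Fin (D ℓ)) → ℝ)
    (hv : ∀ i, (i.1 : ℕ) < m → v i = 0) :
    gradedNormSq σ v ≤ (σ ^ (2 * (m + 1)))⁻¹ * (v ⬝ᵥ v) := by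
  rw [dotProduct, mul_sum]
  refine sum_le_sum fun i _ => ?_
  by_cases hi : (i.1 : ℕ) < m
  · simp [hv i hi]
  · rw [← sq]
    exact mul_le_mul_of_nonneg_right (inv_pow_le_inv_pow_of_le hσ (by omega)) (sq_nonneg _)

lemma le_dotProduct_mulVec_of_forall_ge (hQ : ∀ v, c * gradedNormSq σ v ≤ v ⬝ᵥ M *ᵥ v)
    (hc : 0 ≤ c) (hσ : 1 ≤ σ) (m : ℕ) (v : (Σ ℓ, Fin (D ℓ)) → ℝ)
    (hv : ∀ i, m ≤ (i.1 : ℕ) → v i = 0) :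
    c * (σ ^ (2 * m))⁻¹ * (v ⬝ᵥ v) ≤ v ⬝ᵥ M *ᵥ v := by
  have hvv : v ⬝ᵥ v = ∑ i ∈ univ with (i.1 : ℕ) < m, v i ^ 2 := by
    rw [dotProduct, sum_filter_of_ne fun i _ h => by_contra fun hi => h (by
      simp [hv i (not_lt.1 hi)])]
    simp only [sq]
  rw [hvv, mul_assoc]
  exact (mul_le_mul_of_nonneg_left (inv_pow_mul_sum_lt_le_gradedNormSq hσ m v) hc).trans (hQ v)

lemma le_dotProduct_mulVec_of_graded (hQ : ∀ v, c * gradedNormSq σ v ≤ v ⬝ᵥ M *ᵥ v)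
    (hc : 0 ≤ c) (hσ : 1 ≤ σ) (v : (Σ ℓ, Fin (D ℓ)) → ℝ) :
    c * (σ ^ (2 * L))⁻¹ * (v ⬝ᵥ v) ≤ v ⬝ᵥ M *ᵥ v :=
  le_dotProduct_mulVec_of_forall_ge hQ hc hσ L v fun i hi => absurd i.1.2 (not_lt.2 hi)

lemma dotProduct_mulVec_le_of_forall_lt (hQ : ∀ v, v ⬝ᵥ M *ᵥ v ≤ C * gradedNormSq σ v)
    (hC : 0 ≤ C) (hσ : 1 ≤ σ) (m : ℕ) (v : (Σ ℓ, Fin (D ℓ)) → ℝ)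
    (hv : ∀ i, (i.1 : ℕ) < m → v i = 0) :
    v ⬝ᵥ M *ᵥ v ≤ C * (σ ^ (2 * (m + 1)))⁻¹ * (v ⬝ᵥ v) := by
  rw [mul_assoc]
  exact (hQ v).trans (mul_le_mul_of_nonneg_left (gradedNormSq_le_of_forall_lt hσ m v hv) hC)

theorem card_eigenvalues_mem_Icc_eq_of_graded (hM : M.IsHermitian)
    (hQ : ∀ v, c * gradedNormSq σ v ≤ v ⬝ᵥ M *ᵥ v ∧ v ⬝ᵥ M *ᵥ v ≤ C * gradedNormSq σ v)
    (hc : 0 < c) (hcC : c ≤ C) (hσ : 1 ≤ σ) (hgap : C < c * σ ^ 2) (ℓ : Fin L) :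
    #{i | hM.eigenvalues i ∈ Set.Icc (c * (σ ^ (2 * ((ℓ : ℕ) + 1)))⁻¹)
      (C * (σ ^ (2 * ((ℓ : ℕ) + 1)))⁻¹)} = D ℓ := by
  have hσ0 : 0 < σ := one_pos.trans_le hσ
  rw [hM.card_eigenvalues_mem_Icc_eq (fun i => (i.1 : ℕ))
    (lo := fun m => c * (σ ^ (2 * m))⁻¹) (hi := fun m => C * (σ ^ (2 * m))⁻¹)
    (le_dotProduct_mulVec_of_forall_ge (fun v => (hQ v).1) hc.le hσ)
    (dotProduct_mulVec_le_of_forall_lt (fun v => (hQ v).2) (hc.le.trans hcC) hσ)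
    (fun m => ?_) (fun m => by gcongr) (ℓ : ℕ)]
  · rw [card_filter, ← univ_sigma_univ, sum_sigma]
    simp [Fin.val_inj]
  · have hC : C * (σ ^ 2)⁻¹ < c := by rw [mul_inv_lt_iff₀ (by positivity)]; exact hgap
    calc C * (σ ^ (2 * (m + 1)))⁻¹ = C * (σ ^ 2)⁻¹ * (σ ^ (2 * m))⁻¹ := by ring
      _ < c * (σ ^ (2 * m))⁻¹ := mul_lt_mul_of_pos_right hC (by positivity)

theorem lowerLeft_quadForm_ge (hQ : ∀ v, c * gradedNormSq σ v ≤ v ⬝ᵥ M *ᵥ v)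
    (hc : 0 ≤ c) (hσ : 1 ≤ σ) (m : ℕ) (v : {i : Σ ℓ, Fin (D ℓ) // (i.1 : ℕ) < m} → ℝ) :
    c * (σ ^ (2 * m))⁻¹ * ∑ a, v a * v a ≤ ∑ a, ∑ b, v a * M a.1 b.1 * v b := by
  rw [← extendByZero_dotProduct_self, ← extendByZero_dotProduct_mulVec]
  exact le_dotProduct_mulVec_of_forall_ge hQ hc hσ m _
    fun i hi => extendByZero_of_not (not_lt.2 hi)

theorem lowerLeft_quadForm_inv_le (hQ : ∀ v, c * gradedNormSq σ v ≤ v ⬝ᵥ M *ᵥ v)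
    (hc : 0 < c) (hσ : 1 ≤ σ) (hcC : c⁻¹ ≤ C) (m : ℕ)
    (v : {i : Σ ℓ, Fin (D ℓ) // (i.1 : ℕ) < m} → ℝ) :
    ∑ a, ∑ b, v a * M⁻¹ a.1 b.1 * v b ≤ C * σ ^ (2 * m) * ∑ a, v a * v a := by
  have hσ0 : 0 < σ := one_pos.trans_le hσ
  have hM : IsUnit M.det := isUnit_det_of_le_dotProduct_mulVec (by positivity)
    (le_dotProduct_mulVec_of_graded hQ hc.le hσ)
  rw [← extendByZero_dotProduct_self, ← extendByZero_dotProduct_mulVec]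
  have := dotProduct_inv_mulVec_le hM (fun i => (i.1 : ℕ) < m) (κ := c * (σ ^ (2 * m))⁻¹)
    (by positivity) (fun u => by
      rw [mul_assoc]
      exact (mul_le_mul_of_nonneg_left (inv_pow_mul_sum_lt_le_gradedNormSq hσ m u) hc.le).trans
        (hQ u))
    (extendByZero _ v) fun i hi => extendByZero_of_not hi
  rw [mul_inv, inv_inv] at this
  exact this.trans (mul_le_mul_of_nonneg_right
    (mul_le_mul_of_nonneg_right hcC (by positivity)) (dotProduct_self_nonneg _))

end Graded

theorem statement13_general {L : ℕ} (D : Fin L → ℕ)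
    (H : ℝ → Matrix ((ℓ : Fin L) × Fin (D ℓ)) ((ℓ : Fin L) × Fin (D ℓ)) ℝ)
    (hsymm : ∀ σ : ℝ, (H σ).IsHermitian)
    (hgraded : GradedBlockStructure D H) :
    ∃ C' > (0:ℝ), ∃ c' > (0:ℝ), ∃ σ0' > (0:ℝ), ∀ σ : ℝ, σ0' < σ →
      (∀ ℓ : Fin L,
        (Finset.univ.filter fun i : (j : Fin L) × Fin (D j) =>
            (hsymm σ).eigenvalues i ∈
              Set.Icc (c' * (σ ^ (2 * ((ℓ : ℕ) + 1)))⁻¹)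
                (C' * (σ ^ (2 * ((ℓ : ℕ) + 1)))⁻¹)).card = D ℓ) ∧
      (∀ v : ((j : Fin L) × Fin (D j)) → ℝ,
        c' * (σ ^ (2 * L))⁻¹ * (v ⬝ᵥ v) ≤ v ⬝ᵥ (H σ).mulVec v) ∧
      (∀ ℓ : ℕ, 1 ≤ ℓ → ℓ ≤ L → (∃ j : Fin L, (j : ℕ) < ℓ ∧ 0 < D j) →
        (∀ v : {i : (j : Fin L) × Fin (D j) // (i.1 : ℕ) < ℓ} → ℝ,
          c' * (σ ^ (2 * ℓ))⁻¹ * (∑ a, v a * v a) ≤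
            ∑ a, ∑ b, v a * H σ a.1 b.1 * v b) ∧
        (∀ v : {i : (j : Fin L) × Fin (D j) // (i.1 : ℕ) < ℓ} → ℝ,
          ∑ a, ∑ b, v a * (H σ)⁻¹ a.1 b.1 * v b ≤
            C' * σ ^ (2 * ℓ) * ∑ a, v a * v a)) := by
  obtain ⟨C, hC, c, hc, σ0, hσ0, hblk⟩ := hgraded
  set C' := C + c + 2 / c with hC'
  have hc' : 0 < c / 2 := by positivity
  have h2c : 0 < 2 / c := by positivity
  refine ⟨C', by positivity, c / 2, hc', σ0 + 1 + 2 * C * L / c + C' / (c / 2), by positivity,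
    fun σ hσ => ?_⟩
  have h1 : 0 ≤ 2 * C * L / c := by positivity
  have h2 : 0 ≤ C' / (c / 2) := by positivity
  have hσ1 : 1 ≤ σ := by linarith
  have hsmall : 2 * C * L ≤ c * σ := by
    rw [mul_comm c]; exact ((div_lt_iff₀ hc).1 (by linarith)).le
  have hgap : C' < c / 2 * σ ^ 2 := by
    rw [mul_comm]
    exact (div_lt_iff₀ hc').1 ((by linarith : C' / (c / 2) < σ).trans_le
      (le_self_pow₀ hσ1 two_ne_zero))
  have hQ : ∀ v, c / 2 * gradedNormSq σ v ≤ v ⬝ᵥ H σ *ᵥ v ∧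
      v ⬝ᵥ H σ *ᵥ v ≤ C' * gradedNormSq σ v := fun v =>
    have h := GradedBlockBounds.quadForm_bounds (hblk σ (by linarith)) hC.le hσ1 hsmall v
    ⟨h.1, h.2.trans (mul_le_mul_of_nonneg_right (by linarith) (gradedNormSq_nonneg σ v))⟩
  have hlo := fun v => (hQ v).1
  exact ⟨card_eigenvalues_mem_Icc_eq_of_graded (hsymm σ) hQ hc' (by linarith) hσ1 hgap,
    le_dotProduct_mulVec_of_graded hlo hc'.le hσ1,
    fun ℓ _ _ _ => ⟨lowerLeft_quadForm_ge hlo hc'.le hσ1 ℓ,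
      lowerLeft_quadForm_inv_le hlo hc' hσ1 (by rw [inv_div]; linarith) ℓ⟩⟩

/-- **Eigenvalue structure of matrices with a graded block structure.**
If the symmetric family `H(σ)` has a graded block structure, then for some `C', c', σ0' > 0`
and all `σ > σ0'`: (a) `H(σ)` has exactly `D ℓ` eigenvalues (with multiplicity) in
`[c' σ^{−2ℓ}, C' σ^{−2ℓ}]` for each block `ℓ`, and `λ_min(H(σ)) ≥ c' σ^{−2L}`; (b) for each
`1 ≤ ℓ ≤ L` whose first `ℓ` blocks are not all empty, the upper-left `ℓ × ℓ` block
submatrix satisfies `λ_min ≥ c' σ^{−2ℓ}`; and (c) the corresponding upper-left submatrix of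
`H(σ)⁻¹` satisfies `λ_max ≤ C' σ^{2ℓ}`. -/
theorem statement13 {L : ℕ} (hL : 0 < L) (D : Fin L → ℕ)
    (H : ℝ → Matrix ((ℓ : Fin L) × Fin (D ℓ)) ((ℓ : Fin L) × Fin (D ℓ)) ℝ)
    (hsymm : ∀ σ : ℝ, (H σ).IsHermitian)
    (hgraded : GradedBlockStructure D H) :
    ∃ C' > (0:ℝ), ∃ c' > (0:ℝ), ∃ σ0' > (0:ℝ), ∀ σ : ℝ, σ0' < σ →
      (∀ ℓ : Fin L,
        (Finset.univ.filter fun i : (j : Fin L) × Fin (D j) =>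
            (hsymm σ).eigenvalues i ∈
              Set.Icc (c' * (σ ^ (2 * ((ℓ : ℕ) + 1)))⁻¹)
                (C' * (σ ^ (2 * ((ℓ : ℕ) + 1)))⁻¹)).card = D ℓ) ∧
      (∀ v : ((j : Fin L) × Fin (D j)) → ℝ,
        c' * (σ ^ (2 * L))⁻¹ * (v ⬝ᵥ v) ≤ v ⬝ᵥ (H σ).mulVec v) ∧
      (∀ ℓ : ℕ, 1 ≤ ℓ → ℓ ≤ L → (∃ j : Fin L, (j : ℕ) < ℓ ∧ 0 < D j) →
        (∀ v : {i : (j : Fin L) × Fin (D j) // (i.1 : ℕ) < ℓ} → ℝ,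
          c' * (σ ^ (2 * ℓ))⁻¹ * (∑ a, v a * v a) ≤
            ∑ a, ∑ b, v a * H σ a.1 b.1 * v b) ∧
        (∀ v : {i : (j : Fin L) × Fin (D j) // (i.1 : ℕ) < ℓ} → ℝ,
          ∑ a, ∑ b, v a * (H σ)⁻¹ a.1 b.1 * v b ≤
            C' * σ ^ (2 * ℓ) * ∑ a, v a * v a)) :=
  statement13_general D H hsymm hgraded
end
end
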